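/- Fix γ > 0 and let V(γ) = (1 + sqrt(γ/(γ+1)))/(1 − sqrt(γ/(γ+1))). Set ν_MM = 1 − sqrt(γ/(γ+1)) and define η_MM(ℓ;γ) = (ν_MM − b(ℓ;γ))/(a(ℓ;γ) − 1/(ℓ·ν_MM)) for ℓ > 1/ν_MM and η_MM(ℓ;γ) = 1 for 1 < ℓ ≤ 1/ν_MM. Then: (i) for every ℓ > 1/ν_MM one has a(ℓ;γ)·ℓ ≠ 1/ν_MM, so η_MM is well defined; (ii) ν₋(A(ℓ, η_MM(ℓ;γ); γ)) ≥ ν_MM for every ℓ > 1; (iii) for every r ≥ 1 and every function η : (1,∞) → (0,∞), the supremum over spike configurations ℓ₁ > ℓ₂ > ⋯ > ℓ_r > 1 of K_r((ℓ_i), (η(ℓ_i)); γ) is at least V(γ); and (iv) for η = η_MM(·;γ) this supremum equals exactly V(γ). In particular V(γ) is the minimax condition-number loss over all r-spike configurations. -/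

import Mathlib

open Real Matrix

/-- Cosine `c(ℓ;γ)` from spiked covariance asymptotics. -/
noncomputable def cP (γ ℓ : ℝ) : ℝ :=
  if 1 + Real.sqrt γ < ℓ then Real.sqrt ((1 - γ / (ℓ - 1) ^ 2) / (1 + γ / (ℓ - 1))) else 0

/-- Sine `s(ℓ;γ) = sqrt(1 - c²)`. -/
noncomputable def sP (γ ℓ : ℝ) : ℝ := Real.sqrt (1 - (cP γ ℓ) ^ 2)

/-- The 2×2 block `A(ℓ,η;γ)` of the asymptotic pivot. -/
noncomputable def Amat (γ ℓ η : ℝ) : Matrix (Fin 2) (Fin 2) ℝ :=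
  !![(η * (cP γ ℓ) ^ 2 + (sP γ ℓ) ^ 2) / ℓ, (η - 1) * cP γ ℓ * sP γ ℓ / Real.sqrt ℓ;
     (η - 1) * cP γ ℓ * sP γ ℓ / Real.sqrt ℓ, (cP γ ℓ) ^ 2 + η * (sP γ ℓ) ^ 2]

/-- Largest eigenvalue `ν₊(A(ℓ,η;γ))` (supremum of the real spectrum). -/
noncomputable def nuP (γ ℓ η : ℝ) : ℝ := sSup (spectrum ℝ (Amat γ ℓ η))

/-- Smallest eigenvalue `ν₋(A(ℓ,η;γ))` (infimum of the real spectrum). -/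
noncomputable def nuM (γ ℓ η : ℝ) : ℝ := sInf (spectrum ℝ (Amat γ ℓ η))

/-- Threshold `ℓ₁⁺(γ) = 1 + (γ + sqrt(γ² + 8γ))/2`. -/
noncomputable def ellOnePlus (γ : ℝ) : ℝ := 1 + (γ + Real.sqrt (γ ^ 2 + 8 * γ)) / 2

/-- Optimal single-spike shrinker `η₁*(ℓ;γ)`. -/
noncomputable def eta1star (γ ℓ : ℝ) : ℝ :=
  if ellOnePlus γ < ℓ then ℓ / (1 + γ + 2 * γ / (ℓ - 1)) else 1

/-- Optimal single-spike loss `κ₁*(ℓ;γ)`. -/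
noncomputable def kappa1star (γ ℓ : ℝ) : ℝ :=
  nuP γ ℓ (eta1star γ ℓ) / nuM γ ℓ (eta1star γ ℓ)

/-- `a(ℓ;γ) = c²/ℓ + s²`. -/
noncomputable def aP (γ ℓ : ℝ) : ℝ := (cP γ ℓ) ^ 2 / ℓ + (sP γ ℓ) ^ 2

/-- `b(ℓ;γ) = s²/ℓ + c²`. -/
noncomputable def bP (γ ℓ : ℝ) : ℝ := (sP γ ℓ) ^ 2 / ℓ + (cP γ ℓ) ^ 2

/-- Multi-spike condition-number objective `K_r((ℓᵢ),(ηᵢ);γ)`. -/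
noncomputable def Kr (γ : ℝ) {r : ℕ} (ℓ η : Fin r → ℝ) : ℝ :=
  max 1 (⨆ i, nuP γ (ℓ i) (η i)) / min 1 (⨅ i, nuM γ (ℓ i) (η i))

/-- The minimax shrinker `η_MM(ℓ;γ)`, obtained from the multi-spike shrinker
by tuning `ℓ₁ → ∞`, i.e. `ν = ν_MM = 1 − sqrt(γ/(γ+1))`. -/
noncomputable def etaMM (γ ℓ : ℝ) : ℝ :=
  if 1 / (1 - Real.sqrt (γ / (γ + 1))) < ℓ then
    ((1 - Real.sqrt (γ / (γ + 1))) - bP γ ℓ)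
      / (aP γ ℓ - 1 / (ℓ * (1 - Real.sqrt (γ / (γ + 1)))))
  else 1

/-! ### Auxiliary lemmas -/

section Aux

variable {γ ℓ η : ℝ}

lemma xpos (hγ : 0 < γ) (h : 1 + Real.sqrt γ < ℓ) : 0 < ℓ - 1 := by
  have := Real.sqrt_nonneg γ; linarith

lemma xsq (hγ : 0 < γ) (h : 1 + Real.sqrt γ < ℓ) : γ < (ℓ - 1)^2 :=
  (Real.sqrt_lt' (xpos hγ h)).mp (by linarith)

lemma cP_sq_eq (hγ : 0 < γ) (h : 1 + Real.sqrt γ < ℓ) :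
    (cP γ ℓ)^2 = ((ℓ-1)^2 - γ)/((ℓ-1)*((ℓ-1)+γ)) := by
  have hx := xpos hγ h
  have hx2 := xsq hγ h
  have h1 : (0:ℝ) ≤ 1 - γ/(ℓ-1)^2 := by
    rw [sub_nonneg, div_le_one (by positivity)]; linarith
  have h2 : (0:ℝ) < 1 + γ/(ℓ-1) := by positivity
  rw [cP, if_pos h, Real.sq_sqrt (div_nonneg h1 h2.le)]
  field_simp

lemma cP_sq_le_one (hγ : 0 < γ) (h : 1 < ℓ) : (cP γ ℓ)^2 ≤ 1 := by
  by_cases hc : 1 + Real.sqrt γ < ℓ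
  · have hx := xpos hγ hc
    rw [cP_sq_eq hγ hc, div_le_one (by positivity)]
    nlinarith
  · rw [cP, if_neg hc]; norm_num

lemma sP_sq_eq' (hγ : 0 < γ) (h : 1 < ℓ) : (sP γ ℓ)^2 = 1 - (cP γ ℓ)^2 :=
  Real.sq_sqrt (by linarith [cP_sq_le_one hγ h])

lemma csq_add_ssq (hγ : 0 < γ) (h : 1 < ℓ) : (cP γ ℓ)^2 + (sP γ ℓ)^2 = 1 := by
  rw [sP_sq_eq' hγ h]; ring

lemma sP_sq_eq (hγ : 0 < γ) (h : 1 + Real.sqrt γ < ℓ) :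
    (sP γ ℓ)^2 = γ*ℓ/((ℓ-1)*((ℓ-1)+γ)) := by
  have hx := xpos hγ h
  rw [sP_sq_eq' hγ (by linarith), cP_sq_eq hγ h]
  field_simp
  ring

lemma bP_eq (hγ : 0 < γ) (h : 1 + Real.sqrt γ < ℓ) :
    bP γ ℓ = (ℓ-1)/((ℓ-1)+γ) := by
  have hx := xpos hγ h
  rw [bP, cP_sq_eq hγ h, sP_sq_eq hγ h]
  have hℓ : ℓ ≠ 0 := by linarith
  field_simp
  ring

lemma aP_mul_eq (hγ : 0 < γ) (h : 1 + Real.sqrt γ < ℓ) :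
    aP γ ℓ * ℓ = ((1+γ)*(ℓ-1)+2*γ)/((ℓ-1)+γ) := by
  have hx := xpos hγ h
  rw [aP, cP_sq_eq hγ h, sP_sq_eq hγ h]
  have hℓ : ℓ ≠ 0 := by linarith
  field_simp
  ring

lemma sP_sq_pos (hγ : 0 < γ) (h : 1 < ℓ) : 0 < (sP γ ℓ)^2 := by
  rw [sP_sq_eq' hγ h]
  by_cases hc : 1 + Real.sqrt γ < ℓ
  · have hx := xpos hγ hc
    have hx2 := xsq hγ hc
    rw [cP_sq_eq hγ hc, sub_pos, div_lt_one (by positivity)]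
    nlinarith
  · rw [cP, if_neg hc]; norm_num

lemma aP_pos (hγ : 0 < γ) (h : 1 < ℓ) : 0 < aP γ ℓ := by
  have h1 := sP_sq_pos hγ h
  have h2 : (0:ℝ) ≤ (cP γ ℓ)^2 / ℓ := by positivity
  rw [aP]; linarith

lemma bP_pos (hγ : 0 < γ) (h : 1 < ℓ) : 0 < bP γ ℓ := by
  have h1 := sP_sq_pos hγ h
  have h2 : (0:ℝ) ≤ (cP γ ℓ)^2 := by positivity
  have h3 : 0 < (sP γ ℓ)^2 / ℓ := by positivity
  rw [bP]; linarith

lemma m_facts (hγ : 0 < γ) :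
    0 < Real.sqrt (γ/(γ+1)) ∧ Real.sqrt (γ/(γ+1)) < 1 ∧
    (1+γ)*(1 - (Real.sqrt (γ/(γ+1)))^2) = 1 := by
  have h0 : (0:ℝ) < γ + 1 := by linarith
  have hm2 : (Real.sqrt (γ/(γ+1)))^2 = γ/(γ+1) := Real.sq_sqrt (by positivity)
  refine ⟨Real.sqrt_pos.mpr (by positivity), ?_, ?_⟩
  · exact (Real.sqrt_lt' one_pos).mpr (by rw [one_pow, div_lt_one h0]; linarith)
  · rw [hm2]; field_simp; ring

lemma hx_m (hγ : 0 < γ) (hm0 : 0 < Real.sqrt (γ/(γ+1))) (hm1 : Real.sqrt (γ/(γ+1)) < 1)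
    (hℓ : 1 / (1 - Real.sqrt (γ/(γ+1))) < ℓ) :
    Real.sqrt (γ/(γ+1)) < (ℓ-1)*(1 - Real.sqrt (γ/(γ+1))) := by
  set m := Real.sqrt (γ/(γ+1))
  have h1m : 0 < 1 - m := by linarith
  rw [div_lt_iff₀ h1m] at hℓ
  nlinarith

lemma regime (hγ : 0 < γ) (hℓ : 1 / (1 - Real.sqrt (γ/(γ+1))) < ℓ) :
    1 + Real.sqrt γ < ℓ := by
  obtain ⟨hm0, hm1, hA⟩ := m_facts hγ
  set m := Real.sqrt (γ/(γ+1)) with hm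
  have hx : m < (ℓ-1)*(1-m) := hx_m hγ hm0 hm1 hℓ
  have hB : γ*(1 - m^2) = m^2 := by linear_combination hA
  have h1m : 0 < 1 - m := by linarith
  have hℓ1 : 1 < ℓ := by
    rw [div_lt_iff₀ h1m] at hℓ; nlinarith
  have hx0 : 0 < ℓ - 1 := by linarith
  have hsq : m^2 < (ℓ-1)^2*(1-m)^2 := by nlinarith
  have hγx : γ < (ℓ-1)^2 := by nlinarith [sq_nonneg (ℓ-1), mul_pos hm0 h1m]
  have := (Real.sqrt_lt' hx0).mpr hγx
  linarith

lemma spec_quad (a b d x : ℝ) : x ∈ spectrum ℝ !![a,b;b,d] ↔ (x-a)*(x-d) - b*b = 0 := by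
  have h1 : (algebraMap ℝ (Matrix (Fin 2) (Fin 2) ℝ)) x - !![a,b;b,d] = !![x-a,-b;-b,x-d] := by
    ext i j; fin_cases i <;> fin_cases j <;>
      simp [Matrix.algebraMap_matrix_apply]
  rw [spectrum.mem_iff, h1, Matrix.isUnit_iff_isUnit_det, Matrix.det_fin_two_of,
    isUnit_iff_ne_zero, not_ne_iff]
  constructor <;> intro h <;> linear_combination h

lemma spec_pair_of_roots (a b d p q : ℝ) (h1 : a + d = p + q) (h2 : a*d - b*b = p*q) :
    spectrum ℝ !![a,b;b,d] = {p, q} := by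
  ext x
  rw [spec_quad, Set.mem_insert_iff, Set.mem_singleton_iff]
  have : (x-a)*(x-d) - b*b = (x-p)*(x-q) := by linear_combination (-x)*h1 + h2
  rw [this, mul_eq_zero, sub_eq_zero, sub_eq_zero]

lemma spec_Amat (γ ℓ η p q : ℝ) (hℓ : 0 < ℓ)
    (hcs : (cP γ ℓ)^2 + (sP γ ℓ)^2 = 1)
    (h1 : η * aP γ ℓ + bP γ ℓ = p + q)
    (h2 : η / ℓ = p * q) :
    spectrum ℝ (Amat γ ℓ η) = {p, q} := by
  have hs : Real.sqrt ℓ * Real.sqrt ℓ = ℓ := Real.mul_self_sqrt hℓ.le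
  rw [Amat]
  apply spec_pair_of_roots
  · rw [← h1, aP, bP]; ring
  · rw [← h2]
    have e1 : (η - 1) * cP γ ℓ * sP γ ℓ / Real.sqrt ℓ * ((η - 1) * cP γ ℓ * sP γ ℓ / Real.sqrt ℓ)
        = ((η - 1) * cP γ ℓ * sP γ ℓ)^2 / ℓ := by
      rw [div_mul_div_comm, hs, sq]
    rw [e1, div_mul_eq_mul_div, div_sub_div_same]
    have key : (η * cP γ ℓ^2 + sP γ ℓ^2) * (cP γ ℓ^2 + η * sP γ ℓ^2)
        - ((η - 1) * cP γ ℓ * sP γ ℓ)^2 = η := by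
      linear_combination (η*((cP γ ℓ)^2+(sP γ ℓ)^2) + η) * hcs
    rw [key]

lemma nuM_of_pair {p q : ℝ} (h : spectrum ℝ (Amat γ ℓ η) = {p, q}) (hpq : p ≤ q) :
    nuM γ ℓ η = p := by
  rw [nuM, h, csInf_pair]
  exact min_eq_left hpq

lemma nuP_of_pair {p q : ℝ} (h : spectrum ℝ (Amat γ ℓ η) = {p, q}) (hpq : p ≤ q) :
    nuP γ ℓ η = q := by
  rw [nuP, h, csSup_pair]
  exact max_eq_right hpq

/-- Part (i): strict bound on `aP * ℓ`. -/
lemma aP_mul_lt (hγ : 0 < γ) (hc : 1 / (1 - Real.sqrt (γ/(γ+1))) < ℓ) :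
    aP γ ℓ * ℓ < 1 / (1 - Real.sqrt (γ/(γ+1))) := by
  obtain ⟨hm0, hm1, hA⟩ := m_facts hγ
  set m := Real.sqrt (γ/(γ+1)) with hm
  have h1m : 0 < 1 - m := by linarith
  have hsup : 1 + Real.sqrt γ < ℓ := regime hγ hc
  have hx0 : 0 < ℓ - 1 := xpos hγ hsup
  have hx : m < (ℓ-1)*(1-m) := hx_m hγ hm0 hm1 hc
  have hxγ : 0 < (ℓ-1)+γ := by linarith
  have hB : γ*(1 - m^2) = m^2 := by linear_combination hA
  have hDen : (1-m)*((1+γ)*(ℓ-1)+2*γ) < (ℓ-1) + γ := by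
    nlinarith [mul_pos hm0 (sub_pos.mpr hx), sq_nonneg m, mul_pos hm0 hm0]
  rw [aP_mul_eq hγ hsup, div_lt_div_iff₀ hxγ h1m]
  nlinarith [hDen]

set_option maxHeartbeats 1000000 in
/-- The master lemma for `etaMM`. -/
lemma etaMM_master (hγ : 0 < γ) (hℓ : 1 < ℓ) :
    0 < etaMM γ ℓ ∧ 1 - Real.sqrt (γ/(γ+1)) ≤ nuM γ ℓ (etaMM γ ℓ) ∧
      nuP γ ℓ (etaMM γ ℓ) ≤ 1 + Real.sqrt (γ/(γ+1)) := by
  obtain ⟨hm0, hm1, hA⟩ := m_facts hγ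
  set m := Real.sqrt (γ/(γ+1)) with hm
  have h1m : 0 < 1 - m := by linarith
  have hℓ0 : 0 < ℓ := by linarith
  have hcs := csq_add_ssq hγ hℓ
  have hB : γ*(1 - m^2) = m^2 := by linear_combination hA
  by_cases hc : 1/(1-m) < ℓ
  · -- supercritical case
    have hsup : 1 + Real.sqrt γ < ℓ := regime hγ hc
    have hx0 : 0 < ℓ - 1 := xpos hγ hsup
    have hx : m < (ℓ-1)*(1-m) := hx_m hγ hm0 hm1 hc
    have hxγ : 0 < (ℓ-1)+γ := by linarith
    have hb : bP γ ℓ = (ℓ-1)/((ℓ-1)+γ) := bP_eq hγ hsup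
    have ha : aP γ ℓ * ℓ = ((1+γ)*(ℓ-1)+2*γ)/((ℓ-1)+γ) := aP_mul_eq hγ hsup
    have hP0 : 0 < (1+γ)*(ℓ-1)+2*γ := by nlinarith
    have hDen : (1-m)*((1+γ)*(ℓ-1)+2*γ) < (ℓ-1) + γ := by
      nlinarith [mul_pos hm0 (sub_pos.mpr hx), sq_nonneg m, mul_pos hm0 hm0]
    have hDen' : (1-m)*((1+γ)*(ℓ-1)+2*γ) - ((ℓ-1)+γ) < 0 := by linarith
    have haP : aP γ ℓ = ((1+γ)*(ℓ-1)+2*γ)/(((ℓ-1)+γ)*ℓ) := by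
      rw [eq_div_iff (by positivity), ← mul_assoc]
      rw [mul_comm (aP γ ℓ) ((ℓ-1)+γ), mul_assoc, ha]
      field_simp
    have hden : aP γ ℓ - 1/(ℓ*(1-m)) < 0 := by
      rw [haP, sub_neg, div_lt_div_iff₀ (by positivity) (by positivity)]
      nlinarith [hDen]
    have hnum : (1-m) - bP γ ℓ < 0 := by
      rw [hb, sub_neg, lt_div_iff₀ hxγ]
      nlinarith [mul_pos hm0 (sub_pos.mpr hx)]
    have hηval : etaMM γ ℓ = ((1-m) - bP γ ℓ)/(aP γ ℓ - 1/(ℓ*(1-m))) := by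
      rw [etaMM, ← hm, if_pos hc]
    have hηpos : 0 < etaMM γ ℓ := by
      rw [hηval]
      exact div_pos_of_neg_of_neg hnum hden
    set η := etaMM γ ℓ with hηdef
    have hηx : η = ℓ*(1-m)*((1-m)*((ℓ-1)+γ) - (ℓ-1)) /
        ((1-m)*((1+γ)*(ℓ-1)+2*γ) - ((ℓ-1)+γ)) := by
      rw [hηval, div_eq_div_iff (ne_of_lt hden) (ne_of_lt hDen'), hb, haP]
      field_simp [hℓ0.ne', hxγ.ne', h1m.ne']
    have hT : η * aP γ ℓ + bP γ ℓ =
        ((1-m)^2*((1+γ)*(ℓ-1)+2*γ) - (ℓ-1))/((1-m)*((1+γ)*(ℓ-1)+2*γ) - ((ℓ-1)+γ)) := by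
      rw [eq_div_iff (ne_of_lt hDen'), hηx, haP, hb]
      field_simp [hℓ0.ne', hxγ.ne', h1m.ne', ne_of_lt hDen', ne_of_lt (by linarith : (1 - m) * ((ℓ - 1) * (1 + γ) + γ * 2) - (ℓ - 1 + γ) < 0)]
      ring
    have hG1 : 0 ≤ (1-m)^2*((1+γ)*(ℓ-1)+2*γ) - 2*(1-m)*((ℓ-1)+γ) + (ℓ-1) := by
      have hid : (1+m)*((1-m)^2*((1+γ)*(ℓ-1)+2*γ) - 2*(1-m)*((ℓ-1)+γ) + (ℓ-1))
          = 2*m^2*((ℓ-1)-m) := by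
        linear_combination ((1-m)*(ℓ-1) - 2*m) * hA
      have hxm : m < ℓ-1 := by nlinarith
      nlinarith [hid]
    have hT2ν : 2*(1-m) ≤ η * aP γ ℓ + bP γ ℓ := by
      rw [hT, le_div_iff_of_neg hDen']
      nlinarith [hG1]
    have hT2 : η * aP γ ℓ + bP γ ℓ ≤ 2 := by
      rw [hT, div_le_iff_of_neg hDen']
      have hid2 : (1-m)^2*((1+γ)*(ℓ-1)+2*γ) - 2*(1-m)*((1+γ)*(ℓ-1)+2*γ) + (ℓ-1) + 2*γ
          = 2*γ*m^2 := by linear_combination (-(ℓ-1))*hA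
      nlinarith [hid2, mul_pos hγ (mul_pos hm0 hm0)]
    have hdet : η / ℓ = (1-m) * ((η * aP γ ℓ + bP γ ℓ - (1-m))) := by
      rw [hT, hηx]
      field_simp [hℓ0.ne', hxγ.ne', h1m.ne', ne_of_lt hDen', ne_of_lt (by linarith : (1 - m) * ((ℓ - 1) * (1 + γ) + γ * 2) - (ℓ - 1 + γ) < 0)]
      ring
    have hspec : spectrum ℝ (Amat γ ℓ η) = {1-m, η * aP γ ℓ + bP γ ℓ - (1-m)} :=
      spec_Amat γ ℓ η _ _ hℓ0 hcs (by ring) hdet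
    have hpq : 1-m ≤ η * aP γ ℓ + bP γ ℓ - (1-m) := by linarith
    refine ⟨hηpos, ?_, ?_⟩
    · rw [nuM_of_pair hspec hpq]
    · rw [nuP_of_pair hspec hpq]; linarith
  · -- subcritical case: etaMM = 1
    have hη1 : etaMM γ ℓ = 1 := by rw [etaMM, ← hm, if_neg hc]
    have hspec : spectrum ℝ (Amat γ ℓ 1) = {1/ℓ, 1} := by
      apply spec_Amat γ ℓ 1 (1/ℓ) 1 hℓ0 hcs
      · rw [aP, bP]; field_simp; linear_combination (1+ℓ) * hcs
      · rw [one_div, mul_one]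
    have hpq : 1/ℓ ≤ 1 := by rw [div_le_one hℓ0]; linarith
    have hℓle : ℓ*(1-m) ≤ 1 := by
      push_neg at hc
      rw [le_div_iff₀ h1m] at hc
      linarith [hc]
    rw [hη1]
    refine ⟨one_pos, ?_, ?_⟩
    · rw [nuM_of_pair hspec hpq, le_div_iff₀ hℓ0]
      linarith [hℓle]
    · rw [nuP_of_pair hspec hpq]; linarith

end Aux

/-- Lower-bound weight function (`(1+d(ℓ))/(1-d(ℓ))`). -/
noncomputable def wFn (γ ℓ : ℝ) : ℝ :=
  (1 + Real.sqrt (1 - ((ℓ-1)+γ)^2/((ℓ-1)*((1+γ)*(ℓ-1)+2*γ)))) /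
  (1 - Real.sqrt (1 - ((ℓ-1)+γ)^2/((ℓ-1)*((1+γ)*(ℓ-1)+2*γ))))

section Ratio

variable {γ ℓ η : ℝ}

set_option maxHeartbeats 1000000 in
lemma ratio_lb (hγ : 0 < γ) (hsup : 1 + Real.sqrt γ < ℓ) (hη : 0 < η) :
    0 < nuM γ ℓ η ∧ wFn γ ℓ ≤ nuP γ ℓ η / nuM γ ℓ η := by
  have hx0 : 0 < ℓ - 1 := xpos hγ hsup
  have hx2 : γ < (ℓ-1)^2 := xsq hγ hsup
  have hℓ1 : 1 < ℓ := by linarith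
  have hℓ0 : 0 < ℓ := by linarith
  have hxγ : 0 < (ℓ-1)+γ := by linarith
  have hcs := csq_add_ssq hγ hℓ1
  have ha := aP_pos hγ hℓ1
  have hb := bP_pos hγ hℓ1
  have haℓ := aP_mul_eq hγ hsup
  have hbv := bP_eq hγ hsup
  have hP0 : 0 < (1+γ)*(ℓ-1)+2*γ := by nlinarith
  set F := ((ℓ-1)+γ)^2/((ℓ-1)*((1+γ)*(ℓ-1)+2*γ)) with hF
  have hF0 : 0 < F := by positivity
  have hF1 : F ≤ 1 := by
    rw [hF, div_le_one (by positivity)]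
    nlinarith
  have hab' : ((ℓ-1)+γ)^2*(aP γ ℓ*ℓ*bP γ ℓ) = ((ℓ-1)*((1+γ)*(ℓ-1)+2*γ)) := by
    rw [haℓ, hbv]
    field_simp
  set T := η * aP γ ℓ + bP γ ℓ with hT
  have hT0 : 0 < T := add_pos (mul_pos hη ha) hb
  set Δ := T^2 - 4*(η/ℓ) with hΔ
  have h1 : 4*(η * aP γ ℓ * bP γ ℓ) ≤ T^2 := by
    rw [hT]; nlinarith [sq_nonneg (η*aP γ ℓ - bP γ ℓ)]
  have h3 : 4*η/ℓ ≤ T^2*F := by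
    rw [hF, ← mul_div_assoc, div_le_div_iff₀ hℓ0 (by positivity)]
    have e : 4*η*((ℓ-1)*((1+γ)*(ℓ-1)+2*γ)) =
        (4*(η*aP γ ℓ*bP γ ℓ)) * (((ℓ-1)+γ)^2*ℓ) := by
      linear_combination (-(4*η))*hab'
    rw [e]
    nlinarith [mul_le_mul_of_nonneg_right h1 (by positivity : (0:ℝ) ≤ ((ℓ-1)+γ)^2*ℓ)]
  have hΔge : T^2*(1-F) ≤ Δ := by
    rw [hΔ]
    have he : T^2*(1-F) = T^2 - T^2*F := by ring
    rw [he]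
    have : 4*(η/ℓ) = 4*η/ℓ := by ring
    linarith [h3]
  have hΔ0 : 0 ≤ Δ := le_trans (by nlinarith [hF1, sq_nonneg T]) hΔge
  have hΔlt : Δ < T^2 := by
    rw [hΔ]
    have : 0 < η/ℓ := by positivity
    linarith
  have hsd : Real.sqrt Δ < T := (Real.sqrt_lt' hT0).mpr hΔlt
  have hsd0 : 0 ≤ Real.sqrt Δ := Real.sqrt_nonneg _
  have hsq : Real.sqrt Δ ^ 2 = Δ := Real.sq_sqrt hΔ0
  have hspec : spectrum ℝ (Amat γ ℓ η) = {(T - Real.sqrt Δ)/2, (T + Real.sqrt Δ)/2} := by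
    apply spec_Amat γ ℓ η _ _ hℓ0 hcs
    · rw [hT]; ring
    · linear_combination ((1:ℝ)/4)*hsq + ((1:ℝ)/4)*hΔ
  have hpq : (T - Real.sqrt Δ)/2 ≤ (T + Real.sqrt Δ)/2 := by linarith
  have hnuM : nuM γ ℓ η = (T - Real.sqrt Δ)/2 := nuM_of_pair hspec hpq
  have hnuP : nuP γ ℓ η = (T + Real.sqrt Δ)/2 := nuP_of_pair hspec hpq
  have hnuM0 : 0 < nuM γ ℓ η := by rw [hnuM]; linarith
  refine ⟨hnuM0, ?_⟩
  set d := Real.sqrt (1 - F) with hd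
  have hd0 : 0 ≤ d := Real.sqrt_nonneg _
  have hd2 : d^2 = 1 - F := Real.sq_sqrt (by linarith)
  have hd1 : d < 1 := by
    have h := (Real.sqrt_lt' one_pos).mpr (show 1 - F < 1^2 by nlinarith)
    simpa [hd] using h
  have hTd : T*d ≤ Real.sqrt Δ := by
    have h1' : (T*d)^2 ≤ Δ := by rw [mul_pow, hd2]; nlinarith [hΔge]
    calc T*d = Real.sqrt ((T*d)^2) := (Real.sqrt_sq (by positivity)).symm
    _ ≤ Real.sqrt Δ := Real.sqrt_le_sqrt h1'
  rw [wFn, hnuP, hnuM, ← hF, ← hd]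
  rw [div_le_div_iff₀ (by linarith) (by linarith)]
  nlinarith [hTd]

end Ratio

lemma wFn_tendsto {γ : ℝ} (hγ : 0 < γ) :
    Filter.Tendsto (wFn γ) Filter.atTop
      (nhds ((1 + Real.sqrt (γ/(γ+1)))/(1 - Real.sqrt (γ/(γ+1))))) := by
  obtain ⟨hm0, hm1, hA⟩ := m_facts hγ
  have hFlim : Filter.Tendsto
      (fun ℓ : ℝ => ((ℓ-1)+γ)^2/((ℓ-1)*((1+γ)*(ℓ-1)+2*γ))) Filter.atTop
      (nhds (1/(1+γ))) := by
    have h1 : Filter.Tendsto (fun ℓ : ℝ => ℓ - 1) Filter.atTop Filter.atTop :=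
      Filter.tendsto_atTop_add_const_right _ (-1) Filter.tendsto_id
    have hx : Filter.Tendsto (fun ℓ : ℝ => (ℓ-1)⁻¹) Filter.atTop (nhds 0) :=
      h1.inv_tendsto_atTop
    have hG : Filter.Tendsto (fun u : ℝ => (1+γ*u)^2/((1+γ) + 2*γ*u)) (nhds 0)
        (nhds (1/(1+γ))) := by
      have he : ((1:ℝ)+γ*0)^2/((1+γ)+2*γ*0) = 1/(1+γ) := by norm_num
      rw [← he]
      apply ContinuousAt.tendsto
      apply ContinuousAt.div
      · fun_prop
      · fun_prop
      · norm_num; linarith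
    refine Filter.Tendsto.congr' ?_ (hG.comp hx)
    filter_upwards [Filter.eventually_gt_atTop 1] with ℓ hℓ
    have hx0 : ℓ - 1 ≠ 0 := by intro h; rw [sub_eq_zero] at h; linarith
    simp only [Function.comp_apply]
    have hx0' : 0 < ℓ - 1 := by linarith
    have hu : 0 < (ℓ-1)⁻¹ := inv_pos.mpr hx0'
    have hP0 : 0 < (1+γ)*(ℓ-1)+2*γ := by nlinarith
    have hux : (ℓ-1)*(ℓ-1)⁻¹ = 1 := mul_inv_cancel₀ hx0
    have e1 : 1+γ*(ℓ-1)⁻¹ = ((ℓ-1)+γ)*(ℓ-1)⁻¹ := by linear_combination (-1:ℝ)*hux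
    have e2 : (1+γ)+2*γ*(ℓ-1)⁻¹ = ((1+γ)*(ℓ-1)+2*γ)*(ℓ-1)⁻¹ := by
      linear_combination (-(1+γ))*hux
    rw [e1, e2, mul_pow,
      div_eq_div_iff (ne_of_gt (mul_pos hP0 hu)) (ne_of_gt (mul_pos hx0' hP0))]
    linear_combination (((ℓ-1)+γ)^2*((1+γ)*(ℓ-1)+2*γ)*(ℓ-1)⁻¹)*hux
  have hmval : Real.sqrt (1 - 1/(1+γ)) = Real.sqrt (γ/(γ+1)) := by
    have h0 : (1:ℝ)+γ ≠ 0 := by linarith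
    have h1 : (γ:ℝ)+1 ≠ 0 := by linarith
    have : (1:ℝ) - 1/(1+γ) = γ/(γ+1) := by
      rw [sub_eq_iff_eq_add, div_add_div _ _ h1 h0, eq_div_iff (mul_ne_zero h1 h0)]
      ring
    rw [this]
  have hdlim : Filter.Tendsto
      (fun ℓ : ℝ => Real.sqrt (1 - ((ℓ-1)+γ)^2/((ℓ-1)*((1+γ)*(ℓ-1)+2*γ)))) Filter.atTop
      (nhds (Real.sqrt (γ/(γ+1)))) := by
    rw [← hmval]
    exact (Real.continuous_sqrt.tendsto _).comp (tendsto_const_nhds.sub hFlim)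
  have h1 : Filter.Tendsto
      (fun ℓ : ℝ => (1 + Real.sqrt (1 - ((ℓ-1)+γ)^2/((ℓ-1)*((1+γ)*(ℓ-1)+2*γ)))) /
        (1 - Real.sqrt (1 - ((ℓ-1)+γ)^2/((ℓ-1)*((1+γ)*(ℓ-1)+2*γ))))) Filter.atTop
      (nhds ((1 + Real.sqrt (γ/(γ+1)))/(1 - Real.sqrt (γ/(γ+1))))) :=
    (tendsto_const_nhds.add hdlim).div (tendsto_const_nhds.sub hdlim) (by linarith)
  exact h1

set_option maxHeartbeats 1000000 in
/-- well-definedness of `η_MM`, the lower bound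
`ν₋(A(ℓ,η_MM(ℓ);γ)) ≥ ν_MM`, the minimax lower bound `V(γ)` valid for every
scalar shrinker, and the fact that `η_MM` attains it: the supremum of its
loss over all `r`-spike configurations is exactly
`V(γ) = (1+sqrt(γ/(γ+1)))/(1−sqrt(γ/(γ+1)))`. -/
theorem stmt19 (γ : ℝ) (hγ : 0 < γ) :
    (∀ ℓ : ℝ, 1 / (1 - Real.sqrt (γ / (γ + 1))) < ℓ →
      aP γ ℓ * ℓ ≠ 1 / (1 - Real.sqrt (γ / (γ + 1)))) ∧
    (∀ ℓ : ℝ, 1 < ℓ →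
      1 - Real.sqrt (γ / (γ + 1)) ≤ nuM γ ℓ (etaMM γ ℓ)) ∧
    (∀ r : ℕ, 1 ≤ r → ∀ ηf : ℝ → ℝ, (∀ x : ℝ, 1 < x → 0 < ηf x) →
      ∀ B ∈ upperBounds {x : ℝ | ∃ ℓ : Fin r → ℝ, StrictAnti ℓ ∧ (∀ i, 1 < ℓ i) ∧
          x = Kr γ ℓ (fun i => ηf (ℓ i))},
        (1 + Real.sqrt (γ / (γ + 1))) / (1 - Real.sqrt (γ / (γ + 1))) ≤ B) ∧
    (∀ r : ℕ, 1 ≤ r →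
      IsLUB {x : ℝ | ∃ ℓ : Fin r → ℝ, StrictAnti ℓ ∧ (∀ i, 1 < ℓ i) ∧
          x = Kr γ ℓ (fun i => etaMM γ (ℓ i))}
        ((1 + Real.sqrt (γ / (γ + 1))) / (1 - Real.sqrt (γ / (γ + 1))))) := by
  obtain ⟨hm0, hm1, hA⟩ := m_facts hγ
  have h1m : 0 < 1 - Real.sqrt (γ/(γ+1)) := by linarith
  have part3 : ∀ r : ℕ, 1 ≤ r → ∀ ηf : ℝ → ℝ, (∀ x : ℝ, 1 < x → 0 < ηf x) →
      ∀ B ∈ upperBounds {x : ℝ | ∃ ℓ : Fin r → ℝ, StrictAnti ℓ ∧ (∀ i, 1 < ℓ i) ∧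
          x = Kr γ ℓ (fun i => ηf (ℓ i))},
        (1 + Real.sqrt (γ / (γ + 1))) / (1 - Real.sqrt (γ / (γ + 1))) ≤ B := by
    intro r hr ηf hηf B hB
    have hi0 : (0:ℕ) < r := hr
    haveI : Nonempty (Fin r) := Fin.pos_iff_nonempty.mp hi0
    have hev : ∀ᶠ M in Filter.atTop, wFn γ (M + r) ≤ B := by
      filter_upwards [Filter.eventually_gt_atTop (1 + Real.sqrt γ)] with M hM
      set ℓc : Fin r → ℝ := fun i => M + (r : ℝ) - (i.val : ℝ) with hℓc
      have hanti : StrictAnti ℓc := by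
        intro i j hij
        simp only [hℓc]
        have : (i.val:ℝ) < j.val := by exact_mod_cast hij
        linarith
      have hgt : ∀ i : Fin r, 1 + Real.sqrt γ < ℓc i := by
        intro i
        have : (i.val:ℝ) < r := by exact_mod_cast i.2
        simp only [hℓc]; linarith
      have h1i : ∀ i, 1 < ℓc i := fun i => by
        have h := Real.sqrt_nonneg γ; have := hgt i; linarith
      have hrl := fun i => ratio_lb hγ (hgt i) (hηf _ (h1i i))
      have hBK := hB ⟨ℓc, hanti, h1i, rfl⟩
      set i0 : Fin r := ⟨0, hi0⟩ with hi0def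
      have hbddA : BddAbove (Set.range fun i => nuP γ (ℓc i) (ηf (ℓc i))) :=
        Set.Finite.bddAbove (Set.finite_range _)
      have hbddB : BddBelow (Set.range fun i => nuM γ (ℓc i) (ηf (ℓc i))) :=
        Set.Finite.bddBelow (Set.finite_range _)
      have hnum0 : nuP γ (ℓc i0) (ηf (ℓc i0)) ≤ max 1 (⨆ i, nuP γ (ℓc i) (ηf (ℓc i))) :=
        le_trans (le_ciSup hbddA i0) (le_max_right _ _)
      have hI : 0 < min 1 (⨅ i, nuM γ (ℓc i) (ηf (ℓc i))) := by
        obtain ⟨j, hj⟩ := Finite.exists_min (fun i => nuM γ (ℓc i) (ηf (ℓc i)))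
        have hIeq : (⨅ i, nuM γ (ℓc i) (ηf (ℓc i))) = nuM γ (ℓc j) (ηf (ℓc j)) :=
          le_antisymm (ciInf_le hbddB j) (le_ciInf hj)
        rw [lt_min_iff, hIeq]
        exact ⟨one_pos, (hrl j).1⟩
      have hden0 : min 1 (⨅ i, nuM γ (ℓc i) (ηf (ℓc i))) ≤ nuM γ (ℓc i0) (ηf (ℓc i0)) :=
        le_trans (min_le_right _ _) (ciInf_le hbddB i0)
      have hKrge : nuP γ (ℓc i0) (ηf (ℓc i0)) / nuM γ (ℓc i0) (ηf (ℓc i0)) ≤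
          Kr γ ℓc (fun i => ηf (ℓc i)) := by
        rw [Kr]
        exact div_le_div₀ (le_trans zero_le_one (le_max_left 1 _)) hnum0 hI hden0
      have hw : wFn γ (ℓc i0) ≤ nuP γ (ℓc i0) (ηf (ℓc i0)) / nuM γ (ℓc i0) (ηf (ℓc i0)) :=
        (hrl i0).2
      have hℓ0v : ℓc i0 = M + r := by simp [hℓc, hi0def]
      rw [← hℓ0v]
      linarith [hBK, hw, hKrge]
    have hlim : Filter.Tendsto (fun M : ℝ => wFn γ (M + r)) Filter.atTop
        (nhds ((1 + Real.sqrt (γ/(γ+1)))/(1 - Real.sqrt (γ/(γ+1))))) :=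
      (wFn_tendsto hγ).comp (Filter.tendsto_atTop_add_const_right _ _ Filter.tendsto_id)
    exact le_of_tendsto hlim hev
  refine ⟨fun ℓ h => ne_of_lt (aP_mul_lt hγ h),
    fun ℓ h => (etaMM_master hγ h).2.1, part3, ?_⟩
  intro r hr
  constructor
  · rintro x ⟨ℓc, hanti, h1i, rfl⟩
    haveI : Nonempty (Fin r) := Fin.pos_iff_nonempty.mp hr
    have hM := fun i => etaMM_master hγ (h1i i)
    rw [Kr]
    apply div_le_div₀ (by linarith)
    · exact max_le (by linarith) (ciSup_le fun i => (hM i).2.2)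
    · exact h1m
    · exact le_min (by linarith) (le_ciInf fun i => (hM i).2.1)
  · intro B hB
    exact part3 r hr (etaMM γ) (fun x hx => (etaMM_master hγ hx).1) B hB
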